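/- The identity h_{23}(t|t_1,Z) = −(∂/∂t) log(−φ^(1))(𝒜(t_1,t|Z)) holds, where 𝒜(t_1,t|Z) = A_{1.}(t_1|Z) + A_{23}(t|Z) − A_{23}(t_1|Z); consequently 𝒜(t_1,t|Z) = ξ(exp{−H_{23}(t|t_1,Z)}) with ξ the inverse of −φ^(1) and H_{23}(t|t_1,Z) = ∫_{t_1}^t h_{23}(u|t_1,Z)du, provided 𝒜(t_1,t_1|Z) = ξ(1), i.e., A_{1.}(t_1|Z) = ξ(1). -/

import Mathlib

/-!
The chain rule gives `d/ds log(-φ'(𝒜 s)) = α₂₃(s) φ''(𝒜 s) / φ'(𝒜 s) = -h₂₃(s)`, the first identity.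
For the second we integrate this over `[t₁, t]`. As `φ''` need not be continuous, integrability
of the derivative comes from monotonicity instead: `-φ'` has the left inverse `ξ` on `[0, ∞)`, so
it is injective and, being continuous, strictly monotone on `[0, 𝒜 t]`; hence `log(-φ'(𝒜 s))` is
monotone on `[t₁, t]` and its derivative has constant sign. Since `-φ'(𝒜 t₁) = -φ'(ξ 1) = 1`,
exponentiating and applying `ξ` recovers `𝒜 t`.
-/

open Real Set

theorem HasDerivAt.nonneg_of_monotoneOn_Icc {f : ℝ → ℝ} {f' a b x : ℝ} (hx : x ∈ Ioo a b)
    (hd : HasDerivAt f f' x) (hf : MonotoneOn f (Icc a b)) : 0 ≤ f' := by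
  have hacc : AccPt x (Filter.principal (Icc a b)) := by
    simpa using (PerfectSpace.univ_preperfect x (mem_univ x)).nhds_inter (Icc_mem_nhds hx.1 hx.2)
  exact hd.hasDerivWithinAt.nonneg_of_monotoneOn hacc hf

theorem intervalIntegrable_deriv_of_monotoneOn_or_antitoneOn {f f' : ℝ → ℝ} {a b : ℝ}
    (hab : a ≤ b) (hcont : ContinuousOn f (Icc a b))
    (hderiv : ∀ x ∈ Ioo a b, HasDerivAt f (f' x) x)
    (hf : MonotoneOn f (Icc a b) ∨ AntitoneOn f (Icc a b)) :
    IntervalIntegrable f' MeasureTheory.volume a b := by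
  rw [intervalIntegrable_iff_integrableOn_Ioc_of_le hab]
  rcases hf with hmono | hanti
  · exact intervalIntegral.integrableOn_deriv_of_nonneg hcont hderiv
      fun x hx => (hderiv x hx).nonneg_of_monotoneOn_Icc hx hmono
  · simpa using (intervalIntegral.integrableOn_deriv_of_nonneg hcont.neg
      (fun x hx => (hderiv x hx).neg)
      fun x hx => (hderiv x hx).neg.nonneg_of_monotoneOn_Icc hx hanti.neg).neg

theorem monotoneOn_or_antitoneOn_comp_of_injOn {β : Type*} [Preorder β] {g : ℝ → ℝ} {f : β → ℝ}
    {a b : β} {c d : ℝ} (hcd : c ≤ d) (hg : ContinuousOn g (Icc c d)) (hinj : InjOn g (Icc c d))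
    (hf : MonotoneOn f (Icc a b)) (hmaps : MapsTo f (Icc a b) (Icc c d)) :
    MonotoneOn (g ∘ f) (Icc a b) ∨ AntitoneOn (g ∘ f) (Icc a b) :=
  (hg.strictMonoOn_of_injOn_Icc' hcd hinj).imp
    (fun h => h.monotoneOn.comp hf hmaps) (fun h => h.antitoneOn.comp_MonotoneOn hf hmaps)

theorem hasDerivAt_log_neg_deriv_comp {φ A : ℝ → ℝ} {a s : ℝ}
    (hφ : DifferentiableAt ℝ (deriv φ) (A s)) (hne : deriv φ (A s) ≠ 0) (hA : HasDerivAt A a s) :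
    HasDerivAt (fun r => log (-(deriv φ (A r)))) (a * iteratedDeriv 2 φ (A s) / deriv φ (A s))
      s := by
  refine (((hφ.hasDerivAt.comp s hA).neg).log (neg_ne_zero.2 hne)).congr_deriv ?_
  rw [iteratedDeriv_succ, iteratedDeriv_one, Pi.neg_apply, Function.comp_apply, neg_div_neg_eq,
    mul_comm]

theorem injOn_log_neg_deriv {φ ξ : ℝ → ℝ} (hφ' : ∀ s ≥ (0:ℝ), deriv φ s < 0)
    (hξ : ∀ s ≥ (0:ℝ), ξ (-(deriv φ s)) = s) : InjOn (fun x => log (-(deriv φ x))) (Ici 0) :=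
  LeftInvOn.injOn (f₁' := fun y => ξ (exp y)) fun x hx => by
    simp only [exp_log (neg_pos.2 (hφ' x hx)), hξ x hx]

theorem frailty_hazard_23_log_identity_general (φ ξ α23 : ℝ → ℝ)
    (hφ2 : ∀ s : ℝ, DifferentiableAt ℝ (deriv φ) s)
    (hφ' : ∀ s ≥ (0:ℝ), deriv φ s < 0)
    (hξ1 : ∀ s ≥ (0:ℝ), ξ (-(deriv φ s)) = s)
    (hξ2 : ∀ u ∈ Set.Ioc (0:ℝ) 1, -(deriv φ (ξ u)) = u)
    (hα : Continuous α23) (hαnn : ∀ u, 0 ≤ α23 u)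
    (t1 : ℝ) (A1t1 : ℝ) (hA1 : 0 ≤ A1t1) :
    let 𝒜 : ℝ → ℝ := fun s => A1t1 + (∫ u in (0:ℝ)..s, α23 u) - ∫ u in (0:ℝ)..t1, α23 u
    let h23 : ℝ → ℝ := fun s => -(α23 s) * iteratedDeriv 2 φ (𝒜 s) / deriv φ (𝒜 s);
    ∀ t > t1,
      h23 t = -(deriv (fun s => Real.log (-(deriv φ (𝒜 s)))) t) ∧
      (A1t1 = ξ 1 → 𝒜 t = ξ (Real.exp (-(∫ u in t1..t, h23 u)))) := by
  intro 𝒜 h23 t ht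
  have h𝒜 : ∀ s, HasDerivAt 𝒜 (α23 s) s := fun s =>
    ((intervalIntegral.integral_hasDerivAt_right (hα.intervalIntegrable 0 s)
      (hα.stronglyMeasurableAtFilter _ _) hα.continuousAt).const_add A1t1).sub_const _
  have h𝒜mono : Monotone 𝒜 := monotone_of_hasDerivAt_nonneg h𝒜 hαnn
  have h𝒜t1 : 𝒜 t1 = A1t1 := add_sub_cancel_right _ _
  have h𝒜nonneg : ∀ s ≥ t1, 0 ≤ 𝒜 s := fun s hs => hA1.trans (h𝒜t1 ▸ h𝒜mono hs)
  set G := fun s => log (-(deriv φ (𝒜 s)))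
  have hG : ∀ s ≥ t1, HasDerivAt G (-h23 s) s := fun s hs => by
    convert hasDerivAt_log_neg_deriv_comp (hφ2 _) (hφ' _ (h𝒜nonneg s hs)).ne (h𝒜 s) using 1
    simp only [h23, neg_mul, neg_div, neg_neg]
  refine ⟨by rw [(hG t ht.le).deriv, neg_neg], fun hξ => ?_⟩
  have hGcont : ContinuousOn G (Icc t1 t) := fun s hs =>
    (hG s hs.1).continuousAt.continuousWithinAt
  have hGmono : MonotoneOn G (Icc t1 t) ∨ AntitoneOn G (Icc t1 t) :=
    monotoneOn_or_antitoneOn_comp_of_injOn (h𝒜nonneg t ht.le)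
      (ContinuousOn.log (fun x _ => (hφ2 x).continuousAt.neg.continuousWithinAt)
        fun x hx => (neg_pos.2 (hφ' x hx.1)).ne')
      ((injOn_log_neg_deriv hφ' hξ1).mono Icc_subset_Ici_self) (h𝒜mono.monotoneOn _)
      fun s hs => ⟨h𝒜nonneg s hs.1, h𝒜mono hs.2⟩
  have hFTC : ∫ u in t1..t, -h23 u = G t - G t1 :=
    intervalIntegral.integral_eq_sub_of_hasDerivAt_of_le ht.le hGcont (fun s hs => hG s hs.1.le)
      (intervalIntegrable_deriv_of_monotoneOn_or_antitoneOn ht.le hGcont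
        (fun s hs => hG s hs.1.le) hGmono)
  have hGt1 : G t1 = 0 := by simp only [G, h𝒜t1, hξ, hξ2 1 ⟨one_pos, le_rfl⟩, log_one]
  rw [intervalIntegral.integral_neg, hGt1, sub_zero] at hFTC
  rw [hFTC, exp_log (neg_pos.2 (hφ' _ (h𝒜nonneg t ht.le))), hξ1 _ (h𝒜nonneg t ht.le)]

/-- The identity `h_{23}(t|t₁) = -(∂/∂t) log(-φ')(𝒜(t₁,t))` holds, where
`𝒜(t₁,t) = A_{1.}(t₁) + A_{23}(t) - A_{23}(t₁)` and
`h_{23}(t|t₁) = -α_{23}(t) φ''(𝒜(t₁,t))/φ'(𝒜(t₁,t))`; consequently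
`𝒜(t₁,t) = ξ(exp(-H_{23}(t|t₁)))` with `ξ` the inverse of `-φ'` and
`H_{23}(t|t₁) = ∫_{t₁}^t h_{23}(u|t₁) du`, provided `A_{1.}(t₁) = ξ(1)`. -/
theorem frailty_hazard_23_log_identity (φ ξ α23 : ℝ → ℝ)
    (hφ2 : ∀ s : ℝ, DifferentiableAt ℝ (deriv φ) s)
    (hφ' : ∀ s ≥ (0:ℝ), deriv φ s < 0)
    (hξ1 : ∀ s ≥ (0:ℝ), ξ (-(deriv φ s)) = s)
    (hξ2 : ∀ u ∈ Set.Ioc (0:ℝ) 1, -(deriv φ (ξ u)) = u)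
    (hα : Continuous α23) (hαnn : ∀ u, 0 ≤ α23 u)
    (t1 : ℝ) (ht1 : 0 ≤ t1) (A1t1 : ℝ) (hA1 : 0 ≤ A1t1) :
    let 𝒜 : ℝ → ℝ := fun s => A1t1 + (∫ u in (0:ℝ)..s, α23 u) - ∫ u in (0:ℝ)..t1, α23 u
    let h23 : ℝ → ℝ := fun s => -(α23 s) * iteratedDeriv 2 φ (𝒜 s) / deriv φ (𝒜 s);
    ∀ t > t1,
      h23 t = -(deriv (fun s => Real.log (-(deriv φ (𝒜 s)))) t) ∧
      (A1t1 = ξ 1 → 𝒜 t = ξ (Real.exp (-(∫ u in t1..t, h23 u)))) :=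
  frailty_hazard_23_log_identity_general φ ξ α23 hφ2 hφ' hξ1 hξ2 hα hαnn t1 A1t1 hA1
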